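/- Let V be a C_1-cofinite ℤ₊-graded vertex algebra with C_1-generators u^1,…,u^l satisfying C_1-relations u^i_k u^j = R(i,j,k) for k ≥ 0. Then in Zhu's algebra A(V), the commutator of the generator images satisfies [o(u^i), o(u^j)] = Σ_{k≥0} C(wt u^i − 1, k) o(R(i,j,k)). -/

import Mathlib

noncomputable section

open scoped BigOperators

/-- The generalized binomial coefficient `C(n, k)` for `n : ℤ`, `k : ℕ`, valued in `ℂ`. -/
def zchoose (n : ℤ) (k : ℕ) : ℂ :=
  (∏ i ∈ Finset.range k, ((n : ℂ) - (i : ℂ))) / (k.factorial : ℂ)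

/-- A vertex algebra over `ℂ`: a state-field correspondence given by modes
`mode u n : V →ₗ[ℂ] V` (the coefficient `u_n` of `Y(u,z) = ∑ u_n z^{-n-1}`), a vacuum `𝟙`
with `Y(𝟙,z) = id`, creation property, truncation, and the Jacobi identity in the
equivalent form of the Borcherds identity on modes. -/
structure VertexAlgebra (V : Type*) [AddCommGroup V] [Module ℂ V] where
  mode : V →ₗ[ℂ] ℤ → V →ₗ[ℂ] V
  vacuum : V
  vacuum_mode : ∀ (n : ℤ) (v : V), mode vacuum n v = if n = -1 then v else 0
  creation : ∀ u : V, mode u (-1) vacuum = u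
  creation_nonneg : ∀ (u : V) (n : ℤ), 0 ≤ n → mode u n vacuum = 0
  truncation : ∀ u v : V, ∃ N : ℕ, ∀ n : ℕ, N ≤ n → mode u (n : ℤ) v = 0
  borcherds : ∀ (u v w : V) (p q r : ℤ),
    ∑ᶠ i : ℕ, zchoose p i • mode (mode u (r + (i : ℤ)) v) (p + q - (i : ℤ)) w
      = ∑ᶠ i : ℕ, ((-1 : ℂ) ^ i * zchoose r i) •
          (mode u (p + r - (i : ℤ)) (mode v (q + (i : ℤ)) w)
            - ((-1 : ℂ) ^ r) • mode v (q + r - (i : ℤ)) (mode u (p + (i : ℤ)) w))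

/-- A `ℤ₊`-graded vertex algebra: `V = ⊕_{n ≥ 0} V_n` with `dim V_0 = 1`, vacuum of
weight `0`, and `u_m w ∈ V_{i+j-m-1}` for `u ∈ V_i`, `w ∈ V_j` (the supremum below
being `⊥` when `i + j - m - 1 < 0`). -/
structure GradedVertexAlgebra (V : Type*) [AddCommGroup V] [Module ℂ V]
    extends VertexAlgebra V where
  grade : ℕ → Submodule ℂ V
  decomp : DirectSum.Decomposition grade
  vacuum_mem : vacuum ∈ grade 0
  grade_zero_dim : Module.finrank ℂ (grade 0) = 1
  mode_grade : ∀ (i j : ℕ) (m : ℤ) (u w : V), u ∈ grade i → w ∈ grade j →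
    mode u m w ∈ ⨆ (k : ℕ) (_ : (k : ℤ) = (i : ℤ) + (j : ℤ) - m - 1), grade k

namespace GradedVertexAlgebra

variable {V : Type*} [AddCommGroup V] [Module ℂ V]

/-- `V_+ = ⊕_{n ≥ 1} V_n`. -/
def Vplus (W : GradedVertexAlgebra V) : Submodule ℂ V :=
  ⨆ n : {n : ℕ // 1 ≤ n}, W.grade n

/-- `C_1(V)`: the span of all `u_{-1}v` and `u_{-2}𝟙` for `u, v ∈ V_+`. -/
def C1 (W : GradedVertexAlgebra V) : Submodule ℂ V :=
  Submodule.span ℂ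
    ({x | ∃ u ∈ W.Vplus, ∃ v ∈ W.Vplus, x = W.mode u (-1) v} ∪
     {x | ∃ u ∈ W.Vplus, x = W.mode u (-2) W.vacuum})

/-- Zhu's product `u ∗ v = Res_z Y(u,z)v (1+z)^k / z = ∑_i C(k,i) u_{i-1} v` for `u`
homogeneous of weight `k`. -/
def starH (W : GradedVertexAlgebra V) (k : ℕ) (u v : V) : V :=
  ∑ i ∈ Finset.range (k + 1), (k.choose i : ℂ) • W.mode u ((i : ℤ) - 1) v

/-- `u ∘ v = Res_z Y(u,z)v (1+z)^k / z² = ∑_i C(k,i) u_{i-2} v` for `u` homogeneous of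
weight `k`. -/
def circH (W : GradedVertexAlgebra V) (k : ℕ) (u v : V) : V :=
  ∑ i ∈ Finset.range (k + 1), (k.choose i : ℂ) • W.mode u ((i : ℤ) - 2) v

/-- `O(V)`: the span of all `u ∘ v` for homogeneous `u` and arbitrary `v`. -/
def O (W : GradedVertexAlgebra V) : Submodule ℂ V :=
  Submodule.span ℂ {x | ∃ (k : ℕ) (u v : V), u ∈ W.grade k ∧ x = W.circH k u v}

/-- The homogeneous component of weight `k` of a vector. -/
noncomputable def component (W : GradedVertexAlgebra V) (k : ℕ) (v : V) : V :=
  letI := W.decomp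
  ((DirectSum.decompose W.grade v) k : V)

/-- Zhu's product `∗` on all of `V`, extended linearly from homogeneous first arguments. -/
noncomputable def gstar (W : GradedVertexAlgebra V) (u v : V) : V :=
  ∑ᶠ k : ℕ, W.starH k (W.component k u) v

end GradedVertexAlgebra


/-!
Since `u ∗ v = ∑ C(wt u, t) u_{t-1} v`, Pascal's rule reduces the theorem to Zhu's lemma
`v ∗ u ≡ ∑ C(wt u - 1, t) u_{t-1} v (mod O(V))`. For it, skew symmetry writes `v_{m-1} u` as
`∑ (-1)^i (u_{m-1+i} v)_{-1-i} 𝟙`, and modulo `O(V)` every `x_{-1-i} 𝟙` is a multiple of `x`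
because `x ∘ 𝟙 = x_{-2} 𝟙 + (wt x) x` and `(x_{-2} 𝟙)_n = -n x_{n-1}`. The resulting
double sum of binomial coefficients collapses by comparing coefficients in
`(1 + X)^a (-X + (1 + X))^n = (1 + X)^a`.
If `wt u = 0`, then `u` is a multiple of the vacuum and both sides vanish.
-/

@[simp]
lemma zchoose_zero (n : ℤ) : zchoose n 0 = 1 := by simp [zchoose]

lemma zchoose_one (n : ℤ) : zchoose n 1 = n := by simp [zchoose]

lemma zchoose_neg_one (k : ℕ) : zchoose (-1) k = (-1) ^ k := by
  have hprod : ∏ i ∈ Finset.range k, (((-1 : ℤ) : ℂ) - i) = (-1) ^ k * k.factorial :=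
    calc ∏ i ∈ Finset.range k, (((-1 : ℤ) : ℂ) - i)
        = ∏ i ∈ Finset.range k, ((-1) * ((i + 1 : ℕ) : ℂ)) :=
          Finset.prod_congr rfl fun i _ => by push_cast; ring
      _ = (-1) ^ k * k.factorial := by
          rw [Finset.prod_mul_distrib, Finset.prod_const, Finset.card_range, ← Nat.cast_prod,
            Finset.prod_range_add_one_eq_factorial]
  rw [zchoose, hprod, mul_div_cancel_right₀ _ (by exact_mod_cast k.factorial_ne_zero)]

namespace VertexAlgebra

variable {V : Type*} [AddCommGroup V] [Module ℂ V] (A : VertexAlgebra V)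

lemma mode_mode_neg_two_vacuum (u w : V) (m : ℤ) :
    A.mode (A.mode u (-2) A.vacuum) m w = (-(m : ℂ)) • A.mode u (m - 1) w := by
  have hb := A.borcherds u A.vacuum w (m + 1) (-1) (-2)
  rw [finsum_eq_sum_of_support_subset (s := Finset.range 2), finsum_eq_single _ 0] at hb
  · norm_num [Finset.sum_range_succ, zchoose_one, A.vacuum_mode, A.creation] at hb
    rw [eq_sub_of_add_eq hb, show m + 1 + -2 = m - 1 by ring]
    module
  · intro i hi
    rw [A.vacuum_mode, if_neg (by omega), A.vacuum_mode, if_neg (by omega)]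
    simp
  · refine Function.support_subset_iff'.mpr fun i hi => ?_
    simp only [Finset.coe_range, Set.mem_Iio, not_lt] at hi
    rw [A.creation_nonneg u _ (by omega)]
    simp

lemma skew_symmetry (u v : V) (r : ℤ) :
    ∑ᶠ i : ℕ, (-1 : ℂ) ^ i • A.mode (A.mode u (r + i) v) (-1 - i) A.vacuum
      = -((-1 : ℂ) ^ r • A.mode v r u) := by
  have hb := A.borcherds u v A.vacuum (-1) 0 r
  rw [finsum_eq_single (fun i : ℕ => _ • (_ - _)) 0] at hb
  · simpa [zchoose_neg_one, A.creation, A.creation_nonneg v 0 le_rfl] using hb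
  · intro i hi
    rw [A.creation_nonneg v _ (by omega), A.creation_nonneg u _ (by omega)]
    simp

end VertexAlgebra

section BinomialSums

open Polynomial

variable {M : Type*} [AddCommGroup M] [Module ℂ M]

lemma sum_neg_one_pow_choose_smul_X_pow_mul (a n : ℕ) :
    ∑ m ∈ Finset.range (n + 1), ((-1 : ℂ) ^ m * n.choose m) •
        (X ^ m * (1 + X : ℂ[X]) ^ (a + n - m)) = (1 + X) ^ a := by
  calc _ = (1 + X) ^ a * ((-X) + (1 + X)) ^ n := by
        rw [add_pow (-X : ℂ[X]) (1 + X) n, Finset.mul_sum]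
        refine Finset.sum_congr rfl fun m hm => ?_
        rw [show a + n - m = a + (n - m) by simp at hm; omega, pow_add, neg_pow, smul_eq_C_mul]
        simp only [map_mul, map_pow, map_neg, map_one, map_natCast]
        ring
    _ = (1 + X) ^ a := by rw [show (-X + (1 + X) : ℂ[X]) = 1 by ring, one_pow, mul_one]

lemma sum_range_coeff_X_pow_mul_smul (F : ℕ → M) (p : ℂ[X]) (m R : ℕ) :
    ∑ t ∈ Finset.range R, (X ^ m * p).coeff t • F t
      = ∑ i ∈ Finset.range (R - m), p.coeff i • F (m + i) := by
  simp_rw [coeff_X_pow_mul', ite_smul, zero_smul, ← Finset.sum_filter, Finset.range_eq_Ico,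
    Finset.Ico_filter_le, Nat.zero_max, Finset.sum_Ico_eq_sum_range, Nat.add_sub_cancel_left,
    Nat.sub_zero, zero_add]

/-- Coefficientwise, `∑_m (-1)^m C(n,m) C(a+n-m, t-m) = C(a,t)`. -/
lemma sum_neg_one_pow_choose_smul_sum_choose_smul (F : ℕ → M) (a n R : ℕ) :
    ∑ m ∈ Finset.range (n + 1), ((-1 : ℂ) ^ m * n.choose m) •
        ∑ i ∈ Finset.range (R - m), ((a + n - m).choose i : ℂ) • F (m + i)
      = ∑ t ∈ Finset.range R, (a.choose t : ℂ) • F t := by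
  let Φ : ℂ[X] →ₗ[ℂ] M := ∑ t ∈ Finset.range R, (lcoeff ℂ t).smulRight (F t)
  have hΦ (p : ℂ[X]) : Φ p = ∑ t ∈ Finset.range R, p.coeff t • F t := by simp [Φ]
  calc _ = Φ (∑ m ∈ Finset.range (n + 1),
          ((-1 : ℂ) ^ m * n.choose m) • (X ^ m * (1 + X : ℂ[X]) ^ (a + n - m))) := by
        rw [map_sum]
        refine Finset.sum_congr rfl fun m _ => ?_
        rw [map_smul, hΦ, sum_range_coeff_X_pow_mul_smul]
        simp only [coeff_one_add_X_pow]
    _ = _ := by rw [sum_neg_one_pow_choose_smul_X_pow_mul, hΦ]; simp only [coeff_one_add_X_pow]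

lemma sum_range_choose_succ_sub_choose_smul (F : ℤ → M) (a N : ℕ) :
    ∑ t ∈ Finset.range (N + 1), (((a + 1).choose t : ℂ) - a.choose t) • F (t - 1)
      = ∑ k ∈ Finset.range N, (a.choose k : ℂ) • F k := by
  rw [Finset.sum_range_succ']
  simp [Nat.choose_succ_succ']

end BinomialSums

namespace GradedVertexAlgebra

variable {V : Type*} [AddCommGroup V] [Module ℂ V] (W : GradedVertexAlgebra V)

lemma mode_mem_grade {i j c : ℕ} {u w : V} (hu : u ∈ W.grade i) (hw : w ∈ W.grade j) {m : ℤ}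
    (hc : (c : ℤ) = i + j - m - 1) : W.mode u m w ∈ W.grade c := by
  have h := W.mode_grade i j m u w hu hw
  simp_rw [← hc, Nat.cast_inj, iSup_iSup_eq_left] at h
  exact h

lemma mode_eq_zero_of_lt {i j : ℕ} {u w : V} (hu : u ∈ W.grade i) (hw : w ∈ W.grade j)
    {m : ℤ} (hm : i + j - m - 1 < 0) : W.mode u m w = 0 := by
  have h := W.mode_grade i j m u w hu hw
  have hk (k : ℕ) : ((k : ℤ) = i + j - m - 1) ↔ False := iff_false_intro (by omega)
  simpa only [hk, iSup_false, iSup_bot, Submodule.mem_bot] using h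

lemma circH_vacuum (n : ℕ) (x : V) :
    W.circH n x W.vacuum = W.mode x (-2) W.vacuum + (n : ℂ) • x := by
  calc W.circH n x W.vacuum
      = ∑ i ∈ Finset.range (n + 2), (n.choose i : ℂ) • W.mode x (i - 2) W.vacuum := by
        rw [circH, Finset.sum_range_succ _ (n + 1), Nat.choose_succ_self, Nat.cast_zero,
          zero_smul, add_zero]
    _ = ∑ i ∈ Finset.range 2, (n.choose i : ℂ) • W.mode x (i - 2) W.vacuum := by
        refine (Finset.sum_subset (Finset.range_subset_range.2 (by omega)) fun i _ hi => ?_).symm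
        rw [W.creation_nonneg x _ (by simp at hi; omega), smul_zero]
    _ = W.mode x (-2) W.vacuum + (n : ℂ) • x := by
        norm_num [Finset.sum_range_succ, W.creation]

lemma mkQ_mode_neg_two_vacuum {n : ℕ} {x : V} (hx : x ∈ W.grade n) :
    W.O.mkQ (W.mode x (-2) W.vacuum) = (-(n : ℂ)) • W.O.mkQ x := by
  have hO : W.O.mkQ (W.circH n x W.vacuum) = 0 :=
    (Submodule.Quotient.mk_eq_zero _).2 (Submodule.subset_span ⟨n, x, W.vacuum, hx, rfl⟩)
  rw [circH_vacuum, map_add, map_smul, add_eq_zero_iff_eq_neg] at hO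
  rw [hO, neg_smul]

lemma mkQ_mode_vacuum (i : ℕ) {n : ℕ} {x : V} (hx : x ∈ W.grade n) :
    W.O.mkQ (W.mode x (-1 - i) W.vacuum)
      = ((-1 : ℂ) ^ i * ((n + i - 1).choose i : ℂ)) • W.O.mkQ x := by
  induction i generalizing n x with
  | zero => simp [W.creation]
  | succ i ih =>
    have hDx : W.mode x (-2) W.vacuum ∈ W.grade (n + 1) :=
      W.mode_mem_grade hx W.vacuum_mem (by push_cast; ring)
    have hD := ih hDx
    have hcoef : -(((-1 - i : ℤ)) : ℂ) = i + 1 := by push_cast; ring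
    rw [W.mode_mode_neg_two_vacuum, hcoef, map_smul, W.mkQ_mode_neg_two_vacuum hx, smul_smul,
      show -1 - (i : ℤ) - 1 = -1 - ↑(i + 1) by push_cast; ring,
      show n + 1 + i - 1 = n + i by omega] at hD
    have hchoose : ((n + i).choose (i + 1) : ℂ) * (i + 1) = (n + i).choose i * n := by
      exact_mod_cast Nat.add_sub_cancel_right n i ▸ Nat.choose_succ_right_eq (n + i) i
    rw [show n + (i + 1) - 1 = n + i by omega]
    refine smul_right_injective _ (Nat.cast_add_one_ne_zero (R := ℂ) i) ?_
    simp only [Nat.cast_add, Nat.cast_one] at hD ⊢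
    rw [hD, smul_smul]
    congr 1
    linear_combination (-1 : ℂ) ^ i * hchoose

lemma mkQ_mode_swap {ki kj : ℕ} {ui uj : V} (hi : ui ∈ W.grade ki) (hj : uj ∈ W.grade kj)
    (m : ℕ) :
    W.O.mkQ (W.mode uj ((m : ℤ) - 1) ui)
      = (-1 : ℂ) ^ m • ∑ i ∈ Finset.range (ki + kj + 1 - m),
          ((ki + kj - m - 1).choose i : ℂ) •
            W.O.mkQ (W.mode ui (((m + i : ℕ) : ℤ) - 1) uj) := by
  have hskew := W.skew_symmetry ui uj ((m : ℤ) - 1)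
  have hsign : (-1 : ℂ) ^ ((m : ℤ) - 1) = -(-1) ^ m := by
    rw [zpow_sub₀ (by norm_num), zpow_natCast, zpow_one, div_neg, div_one]
  rw [finsum_eq_sum_of_support_subset _ (s := Finset.range (ki + kj + 1 - m)), hsign, neg_smul,
    neg_neg] at hskew
  · have hswap : W.mode uj ((m : ℤ) - 1) ui
        = (-1 : ℂ) ^ m • ∑ i ∈ Finset.range (ki + kj + 1 - m),
            (-1 : ℂ) ^ i • W.mode (W.mode ui ((m : ℤ) - 1 + i) uj) (-1 - i) W.vacuum := by
      rw [hskew, smul_smul, ← mul_pow]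
      norm_num
    rw [hswap, map_smul, map_sum]
    congr 1
    refine Finset.sum_congr rfl fun i hi' => ?_
    have hmi : m + i ≤ ki + kj := by simp only [Finset.mem_range] at hi'; omega
    have hmem : W.mode ui (((m + i : ℕ) : ℤ) - 1) uj ∈ W.grade (ki + kj - (m + i)) :=
      W.mode_mem_grade hi hj (by push_cast; omega)
    rw [map_smul, show (m : ℤ) - 1 + i = ((m + i : ℕ) : ℤ) - 1 by push_cast; ring,
      W.mkQ_mode_vacuum i hmem, smul_smul, ← mul_assoc, ← mul_pow,
      show ki + kj - (m + i) + i - 1 = ki + kj - m - 1 by omega]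
    norm_num
  · refine Function.support_subset_iff'.mpr fun i hi' => ?_
    simp only [Finset.coe_range, Set.mem_Iio, not_lt] at hi'
    rw [W.mode_eq_zero_of_lt hi hj (by omega)]
    simp

lemma starH_eq_sum_range_of_le {k N : ℕ} (hkN : k ≤ N) (u v : V) :
    W.starH k u v = ∑ t ∈ Finset.range (N + 1), (k.choose t : ℂ) • W.mode u (t - 1) v :=
  Finset.sum_subset (Finset.range_subset_range.2 (by omega)) fun t _ ht => by
    rw [Nat.choose_eq_zero_of_lt (by simpa using ht), Nat.cast_zero, zero_smul]

/-- Zhu's lemma: modulo `O(V)`, `v ∗ u ≡ Res_z Y(u,z)v (1+z)^{wt u - 1} / z`. -/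
lemma mkQ_starH_swap {k kj : ℕ} {ui uj : V} (hi : ui ∈ W.grade (k + 1))
    (hj : uj ∈ W.grade kj) :
    W.O.mkQ (W.starH kj uj ui)
      = ∑ t ∈ Finset.range (k + 1 + kj + 1),
          (k.choose t : ℂ) • W.O.mkQ (W.mode ui ((t : ℤ) - 1) uj) := by
  rw [← sum_neg_one_pow_choose_smul_sum_choose_smul
    (fun t : ℕ => W.O.mkQ (W.mode ui ((t : ℤ) - 1) uj)), starH, map_sum]
  refine Finset.sum_congr rfl fun m _ => ?_
  rw [map_smul, W.mkQ_mode_swap hi hj, smul_smul, mul_comm,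
    show k + 1 + kj - m - 1 = k + kj - m by omega]

lemma vacuum_ne_zero : W.vacuum ≠ 0 := by
  intro h
  have : Subsingleton V :=
    ⟨fun a b => by rw [← W.creation a, ← W.creation b, h, map_zero, map_zero]⟩
  simpa [Module.finrank_zero_of_subsingleton] using W.grade_zero_dim

lemma exists_smul_vacuum_eq_of_mem_grade_zero {u : V} (hu : u ∈ W.grade 0) :
    ∃ c : ℂ, c • W.vacuum = u := by
  have hvac : (⟨W.vacuum, W.vacuum_mem⟩ : W.grade 0) ≠ 0 := by
    simpa using W.vacuum_ne_zero
  obtain ⟨c, hc⟩ := (finrank_eq_one_iff_of_nonzero' _ hvac).1 W.grade_zero_dim ⟨u, hu⟩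
  exact ⟨c, congrArg Subtype.val hc⟩

lemma starH_zero_smul_vacuum (c : ℂ) (v : V) : W.starH 0 (c • W.vacuum) v = c • v := by
  simp [starH, W.vacuum_mode]

lemma starH_smul_vacuum (k : ℕ) (c : ℂ) (v : V) : W.starH k v (c • W.vacuum) = c • v := by
  rw [starH, Finset.sum_eq_single 0]
  · simp [W.creation]
  · intro i _ hi
    rw [map_smul, W.creation_nonneg v _ (by omega), smul_zero, smul_zero]
  · simp

end GradedVertexAlgebra

/-- for `C_1`-generators `u^i`, `u^j` (homogeneous of weights `k_i`, `k_j`)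
with `C_1`-relations `R(i,j,k) = u^i_k u^j`, in Zhu's algebra `A(V)` the commutator of the
images satisfies `[o(u^i), o(u^j)] = ∑_{k ≥ 0} C(wt u^i - 1, k) o(R(i,j,k))`. -/
theorem zhu_commutator_of_generators {V : Type*} [AddCommGroup V] [Module ℂ V]
    (W : GradedVertexAlgebra V) (ki kj : ℕ) (ui uj : V)
    (hi : ui ∈ W.grade ki) (hj : uj ∈ W.grade kj) :
    W.O.mkQ (W.starH ki ui uj) - W.O.mkQ (W.starH kj uj ui)
      = ∑ᶠ k : ℕ, (((ki - 1).choose k : ℂ)) • W.O.mkQ (W.mode ui (k : ℤ) uj) := by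
  cases ki with
  | zero =>
    obtain ⟨c, rfl⟩ := W.exists_smul_vacuum_eq_of_mem_grade_zero hi
    simp [W.starH_zero_smul_vacuum, W.starH_smul_vacuum, W.vacuum_mode]
  | succ k =>
    have hrhs : ∑ᶠ n : ℕ, ((k + 1 - 1).choose n : ℂ) • W.O.mkQ (W.mode ui n uj)
        = ∑ n ∈ Finset.range (k + 1 + kj), (k.choose n : ℂ) • W.O.mkQ (W.mode ui n uj) := by
      refine finsum_eq_sum_of_support_subset _ (Function.support_subset_iff'.2 fun n hn => ?_)
      simp only [Finset.coe_range, Set.mem_Iio, not_lt] at hn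
      rw [Nat.add_sub_cancel, Nat.choose_eq_zero_of_lt (by omega), Nat.cast_zero, zero_smul]
    rw [hrhs, W.starH_eq_sum_range_of_le (N := k + 1 + kj) (by omega), map_sum,
      W.mkQ_starH_swap hi hj, ← Finset.sum_sub_distrib]
    simp_rw [map_smul, ← sub_smul]
    exact sum_range_choose_succ_sub_choose_smul (fun z => W.O.mkQ (W.mode ui z uj)) k _
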